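/- arXiv:2510.06627 — 2 statements merged into one kernel-verified Lean document; each statement's English description precedes it below -/
import Mathlib

section
/- For matrices A, B ∈ ℝ^{m×n} (von Neumann's trace inequality): tr(AᵀB) ≤ Σᵢ σᵢ(A)·σᵢ(B), where σᵢ(·) denotes singular values in nonincreasing order. -/
open Matrix BigOperators

noncomputable def specNorm {m n : ℕ} (A : Matrix (Fin m) (Fin n) ℝ) : ℝ :=
  ‖LinearMap.toContinuousLinearMap (Matrix.toEuclideanLin A)‖

noncomputable def rmsNorm {d : ℕ} (x : Fin d → ℝ) : ℝ :=
  Real.sqrt (∑ i, x i ^ 2) / Real.sqrt d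

noncomputable def rmsOpNorm {m n : ℕ} (A : Matrix (Fin m) (Fin n) ℝ) : ℝ :=
  ⨆ x : {x : Fin n → ℝ // x ≠ 0}, rmsNorm (A.mulVec x.1) / rmsNorm x.1

noncomputable def padDiag (m n : ℕ) {r : ℕ} (σ : Fin r → ℝ) : Matrix (Fin m) (Fin n) ℝ :=
  Matrix.of fun i j => if h : (i : ℕ) = (j : ℕ) ∧ (i : ℕ) < r then σ ⟨(i : ℕ), h.2⟩ else 0

noncomputable def frobNorm {m n : ℕ} (A : Matrix (Fin m) (Fin n) ℝ) : ℝ :=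
  Real.sqrt (∑ i, ∑ j, A i j ^ 2)

noncomputable def frobSq {m n : ℕ} (A : Matrix (Fin m) (Fin n) ℝ) : ℝ :=
  ∑ i, ∑ j, A i j ^ 2

/-! ### Auxiliary lemmas -/

lemma vn_sum4_comm {M : Type*} [AddCommMonoid M] {ι1 ι2 ι3 ι4 : Type*}
    (s1 : Finset ι1) (s2 : Finset ι2) (s3 : Finset ι3) (s4 : Finset ι4)
    (F : ι1 → ι2 → ι3 → ι4 → M) :
    ∑ a ∈ s1, ∑ b ∈ s2, ∑ c ∈ s3, ∑ d ∈ s4, F a b c d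
    = ∑ c ∈ s3, ∑ d ∈ s4, ∑ a ∈ s1, ∑ b ∈ s2, F a b c d := by
  calc ∑ a ∈ s1, ∑ b ∈ s2, ∑ c ∈ s3, ∑ d ∈ s4, F a b c d
      = ∑ p ∈ s1 ×ˢ s2, ∑ q ∈ s3 ×ˢ s4, F p.1 p.2 q.1 q.2 := by
        simp only [Finset.sum_product]
    _ = ∑ q ∈ s3 ×ˢ s4, ∑ p ∈ s1 ×ˢ s2, F p.1 p.2 q.1 q.2 := Finset.sum_comm
    _ = ∑ c ∈ s3, ∑ d ∈ s4, ∑ a ∈ s1, ∑ b ∈ s2, F a b c d := by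
        simp only [Finset.sum_product]

lemma vn_sum3_comm {M : Type*} [AddCommMonoid M] (s : Finset ℕ) (F : ℕ → ℕ → ℕ → M) :
    ∑ a ∈ s, ∑ b ∈ s, ∑ c ∈ s, F a b c
    = ∑ b ∈ s, ∑ c ∈ s, ∑ a ∈ s, F a b c := by
  calc ∑ a ∈ s, ∑ b ∈ s, ∑ c ∈ s, F a b c
      = ∑ a ∈ s, ∑ q ∈ s ×ˢ s, F a q.1 q.2 := by simp only [Finset.sum_product]
    _ = ∑ q ∈ s ×ˢ s, ∑ a ∈ s, F a q.1 q.2 := Finset.sum_comm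
    _ = ∑ b ∈ s, ∑ c ∈ s, ∑ a ∈ s, F a b c := by simp only [Finset.sum_product]

lemma vn_telesc (f : ℕ → ℝ) (r k : ℕ) (hk : k ≤ r) (h0 : f r = 0) :
    f k = ∑ t ∈ Finset.Ico k r, (f t - f (t+1)) := by
  rw [Finset.sum_Ico_eq_sub _ hk, Finset.sum_range_sub' f, Finset.sum_range_sub' f]
  ring_nf
  rw [h0]; ring

lemma vn_indic (f : ℕ → ℝ) (r k : ℕ) (hk : k < r) (h0 : f r = 0) :
    f k = ∑ t ∈ Finset.range r, (if k ≤ t then f t - f (t+1) else 0) := by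
  rw [vn_telesc f r k hk.le h0, Finset.sum_ite, Finset.sum_const_zero, add_zero]
  apply Finset.sum_congr _ (fun _ _ => rfl)
  ext t; simp [Finset.mem_Ico, and_comm]

lemma vn_count1 (r s : ℕ) (hs : s < r) :
    ∑ k ∈ Finset.range r, (if k ≤ s then (1:ℝ) else 0) = (s : ℝ) + 1 := by
  rw [Finset.sum_boole]
  have : (Finset.range r).filter (fun k => k ≤ s) = Finset.range (s + 1) := by
    ext k; simp [Nat.lt_succ_iff]; omega
  rw [this]; simp

lemma vn_count_le (r s t : ℕ) (hs : s < r) :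
    ∑ k ∈ Finset.range r, (if k ≤ s ∧ k ≤ t then (1:ℝ) else 0) = (min s t : ℝ) + 1 := by
  rw [Finset.sum_boole]
  have : (Finset.range r).filter (fun k => k ≤ s ∧ k ≤ t) = Finset.range (min s t + 1) := by
    ext k; simp [Nat.lt_succ_iff]; omega
  rw [this]; simp

lemma vn_rearr (r : ℕ) (d : ℕ → ℕ → ℝ) (f g : ℕ → ℝ)
    (hd : ∀ k l, 0 ≤ d k l)
    (hrow : ∀ k, k < r → ∑ l ∈ Finset.range r, d k l ≤ 1)
    (hcol : ∀ l, l < r → ∑ k ∈ Finset.range r, d k l ≤ 1)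
    (hf : Antitone f) (hg : Antitone g)
    (hf0 : f r = 0) (hg0 : g r = 0) :
    ∑ k ∈ Finset.range r, ∑ l ∈ Finset.range r, d k l * (f k * g l)
      ≤ ∑ k ∈ Finset.range r, f k * g k := by
  set α : ℕ → ℝ := fun t => f t - f (t+1) with hα
  set β : ℕ → ℝ := fun t => g t - g (t+1) with hβ
  have hαnn : ∀ t, 0 ≤ α t := fun t => sub_nonneg.2 (hf (Nat.le_succ t))
  have hβnn : ∀ t, 0 ≤ β t := fun t => sub_nonneg.2 (hg (Nat.le_succ t))
  have L : ∑ k ∈ Finset.range r, ∑ l ∈ Finset.range r, d k l * (f k * g l)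
      = ∑ s ∈ Finset.range r, ∑ t ∈ Finset.range r, ∑ k ∈ Finset.range r,
          ∑ l ∈ Finset.range r,
          ((if k ≤ s then α s else 0) * (if l ≤ t then β t else 0) * d k l) := by
    rw [← vn_sum4_comm]
    refine Finset.sum_congr rfl fun k hk => Finset.sum_congr rfl fun l hl => ?_
    rw [vn_indic f r k (Finset.mem_range.1 hk) hf0, vn_indic g r l (Finset.mem_range.1 hl) hg0,
        Finset.sum_mul_sum, Finset.mul_sum]
    refine Finset.sum_congr rfl fun s _ => ?_
    rw [Finset.mul_sum]
    refine Finset.sum_congr rfl fun t _ => ?_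
    split_ifs <;> first | ring1 | (exfalso; tauto)
  have R : ∑ k ∈ Finset.range r, f k * g k
      = ∑ s ∈ Finset.range r, ∑ t ∈ Finset.range r, α s * β t * ((min s t : ℝ) + 1) := by
    have : ∀ k ∈ Finset.range r, f k * g k
        = ∑ s ∈ Finset.range r, ∑ t ∈ Finset.range r,
            α s * β t * (if k ≤ s ∧ k ≤ t then (1:ℝ) else 0) := by
      intro k hk
      rw [vn_indic f r k (Finset.mem_range.1 hk) hf0, vn_indic g r k (Finset.mem_range.1 hk) hg0,
          Finset.sum_mul_sum]
      refine Finset.sum_congr rfl fun s _ => Finset.sum_congr rfl fun t _ => ?_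
      split_ifs <;> first | ring1 | (exfalso; tauto)
    rw [Finset.sum_congr rfl this, vn_sum3_comm]
    refine Finset.sum_congr rfl fun s hs => Finset.sum_congr rfl fun t _ => ?_
    rw [← Finset.mul_sum, vn_count_le r s t (Finset.mem_range.1 hs)]
  rw [L, R]
  refine Finset.sum_le_sum fun s hs => Finset.sum_le_sum fun t ht => ?_
  have hs' := Finset.mem_range.1 hs
  have ht' := Finset.mem_range.1 ht
  have key : ∑ k ∈ Finset.range r, ∑ l ∈ Finset.range r,
      ((if k ≤ s then α s else 0) * (if l ≤ t then β t else 0) * d k l)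
      = α s * β t * ∑ k ∈ Finset.range r, ∑ l ∈ Finset.range r,
          (if k ≤ s ∧ l ≤ t then d k l else 0) := by
    rw [Finset.mul_sum]
    refine Finset.sum_congr rfl fun k _ => ?_
    rw [Finset.mul_sum]
    refine Finset.sum_congr rfl fun l _ => ?_
    split_ifs <;> first | ring1 | (exfalso; tauto)
  rw [key]
  have Sle : ∑ k ∈ Finset.range r, ∑ l ∈ Finset.range r,
      (if k ≤ s ∧ l ≤ t then d k l else 0) ≤ (min s t : ℝ) + 1 := by
    have bound1 : ∑ k ∈ Finset.range r, ∑ l ∈ Finset.range r,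
        (if k ≤ s ∧ l ≤ t then d k l else 0) ≤ (s : ℝ) + 1 := by
      rw [← vn_count1 r s hs']
      refine Finset.sum_le_sum fun k hk => ?_
      by_cases h : k ≤ s
      · simp only [h, if_true, true_and]
        calc ∑ l ∈ Finset.range r, (if l ≤ t then d k l else 0)
            ≤ ∑ l ∈ Finset.range r, d k l :=
              Finset.sum_le_sum fun l _ => by split_ifs; exact le_refl _; exact hd k l
          _ ≤ 1 := hrow k (Finset.mem_range.1 hk)
      · simp only [h, if_false, false_and]
        simp
    have bound2 : ∑ k ∈ Finset.range r, ∑ l ∈ Finset.range r,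
        (if k ≤ s ∧ l ≤ t then d k l else 0) ≤ (t : ℝ) + 1 := by
      rw [Finset.sum_comm, ← vn_count1 r t ht']
      refine Finset.sum_le_sum fun l hl => ?_
      by_cases h : l ≤ t
      · simp only [h, if_true, and_true]
        calc ∑ k ∈ Finset.range r, (if k ≤ s then d k l else 0)
            ≤ ∑ k ∈ Finset.range r, d k l :=
              Finset.sum_le_sum fun k _ => by split_ifs; exact le_refl _; exact hd k l
          _ ≤ 1 := hcol l (Finset.mem_range.1 hl)
      · simp only [h, if_false, and_false]
        simp
    rcases le_total s t with h | h
    · rw [min_eq_left (by exact_mod_cast h : (s:ℝ) ≤ t)]; exact bound1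
    · rw [min_eq_right (by exact_mod_cast h : (t:ℝ) ≤ s)]; exact bound2
  exact mul_le_mul_of_nonneg_left Sle (mul_nonneg (hαnn s) (hβnn t))

lemma vn_sum_extend {N r : ℕ} (hr : r ≤ N) (G : Fin r → ℝ) :
    ∑ q : Fin N, (if h : (q : ℕ) < r then G ⟨q, h⟩ else 0) = ∑ k : Fin r, G k := by
  have h1 : ∑ q : Fin N, (if h : (q : ℕ) < r then G ⟨q, h⟩ else 0)
      = ∑ q ∈ Finset.range N, (if h : q < r then G ⟨q, h⟩ else 0) :=
    (Fin.sum_univ_eq_sum_range (fun q => if h : q < r then G ⟨q, h⟩ else 0) N)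
  have h2 : ∑ q ∈ Finset.range N, (if h : q < r then G ⟨q, h⟩ else 0)
      = ∑ q ∈ Finset.range r, (if h : q < r then G ⟨q, h⟩ else 0) := by
    refine (Finset.sum_subset (Finset.range_subset_range.2 hr) ?_).symm
    intro q _ hq
    rw [dif_neg (by simpa using hq)]
  have h3 : ∑ q ∈ Finset.range r, (if h : q < r then G ⟨q, h⟩ else 0)
      = ∑ k : Fin r, G k := by
    rw [← Fin.sum_univ_eq_sum_range (fun q => if h : q < r then G ⟨q, h⟩ else 0) r]
    refine Finset.sum_congr rfl fun k _ => ?_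
    rw [dif_pos k.2]
  rw [h1, h2, h3]

lemma vn_sum_restrict_le {N r : ℕ} (hr : r ≤ N) (g : Fin N → ℝ) (hg : ∀ p, 0 ≤ g p) :
    ∑ k : Fin r, g ⟨k.1, lt_of_lt_of_le k.2 hr⟩ ≤ ∑ p : Fin N, g p := by
  rw [← vn_sum_extend hr (fun k => g ⟨k.1, lt_of_lt_of_le k.2 hr⟩)]
  refine Finset.sum_le_sum fun q _ => ?_
  by_cases h : (q : ℕ) < r
  · rw [dif_pos h]
  · rw [dif_neg h]; exact hg q

lemma vn_sandwich {m n : ℕ} (U : Matrix (Fin m) (Fin m) ℝ) (V : Matrix (Fin n) (Fin n) ℝ)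
    (σ : Fin (min m n) → ℝ) (i : Fin m) (j : Fin n) :
    (U * padDiag m n σ * Vᵀ) i j
      = ∑ k : Fin (min m n), σ k * (U i ⟨k, lt_of_lt_of_le k.2 (min_le_left m n)⟩
          * V j ⟨k, lt_of_lt_of_le k.2 (min_le_right m n)⟩) := by
  rw [Matrix.mul_apply]
  have step1 : ∀ q : Fin n, (U * padDiag m n σ) i q
      = if h : (q : ℕ) < min m n then
          σ ⟨q, h⟩ * U i ⟨q, lt_of_lt_of_le h (min_le_left m n)⟩ else 0 := by
    intro q
    rw [Matrix.mul_apply]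
    by_cases h : (q : ℕ) < min m n
    · rw [dif_pos h]
      rw [Finset.sum_eq_single (⟨(q : ℕ), lt_of_lt_of_le h (min_le_left m n)⟩ : Fin m)]
      · rw [show padDiag m n σ ⟨(q : ℕ), lt_of_lt_of_le h (min_le_left m n)⟩ q
            = σ ⟨q, h⟩ from by simp [padDiag, h]]
        ring
      · intro p _ hp
        have : ¬(((p : ℕ) = (q : ℕ)) ∧ (p : ℕ) < min m n) := by
          rintro ⟨h1, h2⟩
          exact hp (Fin.ext h1)
        simp only [padDiag, Matrix.of_apply, dif_neg this, mul_zero]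
      · intro h'; exact absurd (Finset.mem_univ _) h'
    · rw [dif_neg h]
      apply Finset.sum_eq_zero; intro p _
      have : ¬(((p : ℕ) = (q : ℕ)) ∧ (p : ℕ) < min m n) := fun ⟨h1, h2⟩ => h (h1 ▸ h2)
      simp only [padDiag, Matrix.of_apply, dif_neg this, mul_zero]
  calc ∑ q : Fin n, (U * padDiag m n σ) i q * Vᵀ q j
      = ∑ q : Fin n, (if h : (q : ℕ) < min m n then
          σ ⟨q, h⟩ * (U i ⟨q, lt_of_lt_of_le h (min_le_left m n)⟩ * V j q) else 0) := by
        refine Finset.sum_congr rfl fun q _ => ?_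
        rw [step1 q, Matrix.transpose_apply]
        split_ifs <;> try ring
    _ = ∑ k : Fin (min m n), σ k * (U i ⟨k, lt_of_lt_of_le k.2 (min_le_left m n)⟩
          * V j ⟨k, lt_of_lt_of_le k.2 (min_le_right m n)⟩) := by
        rw [← vn_sum_extend (min_le_right m n)
          (fun k => σ k * (U i ⟨k, lt_of_lt_of_le k.2 (min_le_left m n)⟩
            * V j ⟨k, lt_of_lt_of_le k.2 (min_le_right m n)⟩))]

theorem stmt3 {m n : ℕ} (A B : Matrix (Fin m) (Fin n) ℝ)
    (UA : Matrix (Fin m) (Fin m) ℝ) (VA : Matrix (Fin n) (Fin n) ℝ)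
    (UB : Matrix (Fin m) (Fin m) ℝ) (VB : Matrix (Fin n) (Fin n) ℝ)
    (σA σB : Fin (min m n) → ℝ)
    (hUA : UAᵀ * UA = 1) (hVA : VAᵀ * VA = 1)
    (hUB : UBᵀ * UB = 1) (hVB : VBᵀ * VB = 1)
    (hσAanti : Antitone σA) (hσApos : ∀ i, 0 ≤ σA i)
    (hσBanti : Antitone σB) (hσBpos : ∀ i, 0 ≤ σB i)
    (hA : A = UA * padDiag m n σA * VAᵀ) (hB : B = UB * padDiag m n σB * VBᵀ) :
    Matrix.trace (Aᵀ * B) ≤ ∑ i : Fin (min m n), σA i * σB i := by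
  have rm : min m n ≤ m := min_le_left m n
  have rn : min m n ≤ n := min_le_right m n
  have hUA' : UA * UAᵀ = 1 := mul_eq_one_comm.mp hUA
  have hVA' : VA * VAᵀ = 1 := mul_eq_one_comm.mp hVA
  set M : Matrix (Fin m) (Fin m) ℝ := UAᵀ * UB with hMdef
  set Nt : Matrix (Fin n) (Fin n) ℝ := VAᵀ * VB with hNdef
  have hM1 : Mᵀ * M = 1 := by
    rw [hMdef, Matrix.transpose_mul, Matrix.transpose_transpose, Matrix.mul_assoc,
        ← Matrix.mul_assoc UA UAᵀ UB, hUA', Matrix.one_mul, hUB]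
  have hM2 : M * Mᵀ = 1 := mul_eq_one_comm.mp hM1
  have hN1 : Ntᵀ * Nt = 1 := by
    rw [hNdef, Matrix.transpose_mul, Matrix.transpose_transpose, Matrix.mul_assoc,
        ← Matrix.mul_assoc VA VAᵀ VB, hVA', Matrix.one_mul, hVB]
  have hN2 : Nt * Ntᵀ = 1 := mul_eq_one_comm.mp hN1
  -- entry formulas
  have hAe : ∀ (i : Fin m) (j : Fin n), A i j
      = ∑ k : Fin (min m n), σA k * (UA i ⟨k, lt_of_lt_of_le k.2 rm⟩
          * VA j ⟨k, lt_of_lt_of_le k.2 rn⟩) := fun i j => by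
    rw [hA]; exact vn_sandwich UA VA σA i j
  have hBe : ∀ (i : Fin m) (j : Fin n), B i j
      = ∑ l : Fin (min m n), σB l * (UB i ⟨l, lt_of_lt_of_le l.2 rm⟩
          * VB j ⟨l, lt_of_lt_of_le l.2 rn⟩) := fun i j => by
    rw [hB]; exact vn_sandwich UB VB σB i j
  -- P and Q
  set P : Fin (min m n) → Fin (min m n) → ℝ := fun k l =>
    M ⟨k, lt_of_lt_of_le k.2 rm⟩ ⟨l, lt_of_lt_of_le l.2 rm⟩ with hPdef
  set Q : Fin (min m n) → Fin (min m n) → ℝ := fun k l =>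
    Nt ⟨k, lt_of_lt_of_le k.2 rn⟩ ⟨l, lt_of_lt_of_le l.2 rn⟩ with hQdef
  have hPsum : ∀ k l : Fin (min m n), P k l
      = ∑ i : Fin m, UA i ⟨k, lt_of_lt_of_le k.2 rm⟩ * UB i ⟨l, lt_of_lt_of_le l.2 rm⟩ := by
    intro k l
    rw [hPdef]
    simp only [hMdef, Matrix.mul_apply, Matrix.transpose_apply]
  have hQsum : ∀ k l : Fin (min m n), Q k l
      = ∑ j : Fin n, VA j ⟨k, lt_of_lt_of_le k.2 rn⟩ * VB j ⟨l, lt_of_lt_of_le l.2 rn⟩ := by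
    intro k l
    rw [hQdef]
    simp only [hNdef, Matrix.mul_apply, Matrix.transpose_apply]
  -- trace formula
  have htr : Matrix.trace (Aᵀ * B)
      = ∑ k : Fin (min m n), ∑ l : Fin (min m n), σA k * σB l * (P k l * Q k l) := by
    have h0 : Matrix.trace (Aᵀ * B) = ∑ j : Fin n, ∑ i : Fin m, A i j * B i j := by
      simp [Matrix.trace, Matrix.diag, Matrix.mul_apply, Matrix.transpose_apply]
    rw [h0]
    calc ∑ j : Fin n, ∑ i : Fin m, A i j * B i j
        = ∑ j : Fin n, ∑ i : Fin m, ∑ k : Fin (min m n), ∑ l : Fin (min m n),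
            (σA k * (UA i ⟨k, lt_of_lt_of_le k.2 rm⟩ * VA j ⟨k, lt_of_lt_of_le k.2 rn⟩))
            * (σB l * (UB i ⟨l, lt_of_lt_of_le l.2 rm⟩ * VB j ⟨l, lt_of_lt_of_le l.2 rn⟩)) := by
          refine Finset.sum_congr rfl fun j _ => Finset.sum_congr rfl fun i _ => ?_
          rw [hAe i j, hBe i j, Finset.sum_mul_sum]
      _ = ∑ k : Fin (min m n), ∑ l : Fin (min m n), ∑ j : Fin n, ∑ i : Fin m,
            (σA k * (UA i ⟨k, lt_of_lt_of_le k.2 rm⟩ * VA j ⟨k, lt_of_lt_of_le k.2 rn⟩))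
            * (σB l * (UB i ⟨l, lt_of_lt_of_le l.2 rm⟩ * VB j ⟨l, lt_of_lt_of_le l.2 rn⟩)) :=
          vn_sum4_comm _ _ _ _ _
      _ = ∑ k : Fin (min m n), ∑ l : Fin (min m n), σA k * σB l * (P k l * Q k l) := by
          refine Finset.sum_congr rfl fun k _ => Finset.sum_congr rfl fun l _ => ?_
          rw [hPsum k l, hQsum k l]
          calc ∑ j : Fin n, ∑ i : Fin m,
              (σA k * (UA i ⟨k, lt_of_lt_of_le k.2 rm⟩ * VA j ⟨k, lt_of_lt_of_le k.2 rn⟩))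
              * (σB l * (UB i ⟨l, lt_of_lt_of_le l.2 rm⟩ * VB j ⟨l, lt_of_lt_of_le l.2 rn⟩))
              = ∑ j : Fin n, ∑ i : Fin m, (σA k * σB l) *
                ((UA i ⟨k, lt_of_lt_of_le k.2 rm⟩ * UB i ⟨l, lt_of_lt_of_le l.2 rm⟩)
                  * (VA j ⟨k, lt_of_lt_of_le k.2 rn⟩ * VB j ⟨l, lt_of_lt_of_le l.2 rn⟩)) := by
                refine Finset.sum_congr rfl fun j _ => Finset.sum_congr rfl fun i _ => ?_
                ring
            _ = (σA k * σB l) * ∑ j : Fin n, ∑ i : Fin m,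
                ((UA i ⟨k, lt_of_lt_of_le k.2 rm⟩ * UB i ⟨l, lt_of_lt_of_le l.2 rm⟩)
                  * (VA j ⟨k, lt_of_lt_of_le k.2 rn⟩ * VB j ⟨l, lt_of_lt_of_le l.2 rn⟩)) := by
                simp only [← Finset.mul_sum]
            _ = (σA k * σB l) * ∑ j : Fin n,
                ((∑ i : Fin m, UA i ⟨k, lt_of_lt_of_le k.2 rm⟩ * UB i ⟨l, lt_of_lt_of_le l.2 rm⟩)
                  * (VA j ⟨k, lt_of_lt_of_le k.2 rn⟩ * VB j ⟨l, lt_of_lt_of_le l.2 rn⟩)) := by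
                congr 1
                refine Finset.sum_congr rfl fun j _ => ?_
                rw [Finset.sum_mul]
            _ = σA k * σB l *
                ((∑ i : Fin m, UA i ⟨k, lt_of_lt_of_le k.2 rm⟩ * UB i ⟨l, lt_of_lt_of_le l.2 rm⟩)
                * (∑ j : Fin n, VA j ⟨k, lt_of_lt_of_le k.2 rn⟩ * VB j ⟨l, lt_of_lt_of_le l.2 rn⟩))
                := by rw [← Finset.mul_sum]
  -- row/column bounds
  have hProw : ∀ k : Fin (min m n), ∑ l : Fin (min m n), (P k l)^2 ≤ 1 := by
    intro k
    have h1 := vn_sum_restrict_le rm (fun p => (M ⟨k, lt_of_lt_of_le k.2 rm⟩ p)^2)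
      (fun p => sq_nonneg _)
    refine le_trans h1 ?_
    have h2 : ∑ p : Fin m, (M ⟨k, lt_of_lt_of_le k.2 rm⟩ p)^2
        = (M * Mᵀ) ⟨k, lt_of_lt_of_le k.2 rm⟩ ⟨k, lt_of_lt_of_le k.2 rm⟩ := by
      rw [Matrix.mul_apply]
      refine Finset.sum_congr rfl fun p _ => ?_
      rw [Matrix.transpose_apply, sq]
    rw [h2, hM2, Matrix.one_apply_eq]
  have hPcol : ∀ l : Fin (min m n), ∑ k : Fin (min m n), (P k l)^2 ≤ 1 := by
    intro l
    have h1 := vn_sum_restrict_le rm (fun p => (M p ⟨l, lt_of_lt_of_le l.2 rm⟩)^2)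
      (fun p => sq_nonneg _)
    refine le_trans h1 ?_
    have h2 : ∑ p : Fin m, (M p ⟨l, lt_of_lt_of_le l.2 rm⟩)^2
        = (Mᵀ * M) ⟨l, lt_of_lt_of_le l.2 rm⟩ ⟨l, lt_of_lt_of_le l.2 rm⟩ := by
      rw [Matrix.mul_apply]
      refine Finset.sum_congr rfl fun p _ => ?_
      rw [Matrix.transpose_apply, sq]
    rw [h2, hM1, Matrix.one_apply_eq]
  have hQrow : ∀ k : Fin (min m n), ∑ l : Fin (min m n), (Q k l)^2 ≤ 1 := by
    intro k
    have h1 := vn_sum_restrict_le rn (fun p => (Nt ⟨k, lt_of_lt_of_le k.2 rn⟩ p)^2)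
      (fun p => sq_nonneg _)
    refine le_trans h1 ?_
    have h2 : ∑ p : Fin n, (Nt ⟨k, lt_of_lt_of_le k.2 rn⟩ p)^2
        = (Nt * Ntᵀ) ⟨k, lt_of_lt_of_le k.2 rn⟩ ⟨k, lt_of_lt_of_le k.2 rn⟩ := by
      rw [Matrix.mul_apply]
      refine Finset.sum_congr rfl fun p _ => ?_
      rw [Matrix.transpose_apply, sq]
    rw [h2, hN2, Matrix.one_apply_eq]
  have hQcol : ∀ l : Fin (min m n), ∑ k : Fin (min m n), (Q k l)^2 ≤ 1 := by
    intro l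
    have h1 := vn_sum_restrict_le rn (fun p => (Nt p ⟨l, lt_of_lt_of_le l.2 rn⟩)^2)
      (fun p => sq_nonneg _)
    refine le_trans h1 ?_
    have h2 : ∑ p : Fin n, (Nt p ⟨l, lt_of_lt_of_le l.2 rn⟩)^2
        = (Ntᵀ * Nt) ⟨l, lt_of_lt_of_le l.2 rn⟩ ⟨l, lt_of_lt_of_le l.2 rn⟩ := by
      rw [Matrix.mul_apply]
      refine Finset.sum_congr rfl fun p _ => ?_
      rw [Matrix.transpose_apply, sq]
    rw [h2, hN1, Matrix.one_apply_eq]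
  -- extended functions
  set D : ℕ → ℕ → ℝ := fun a b =>
    if ha : a < min m n then if hb : b < min m n then
      ((P ⟨a, ha⟩ ⟨b, hb⟩)^2 + (Q ⟨a, ha⟩ ⟨b, hb⟩)^2)/2 else 0 else 0 with hDdef
  set F : ℕ → ℝ := fun a => if ha : a < min m n then σA ⟨a, ha⟩ else 0 with hFdef
  set G : ℕ → ℝ := fun a => if ha : a < min m n then σB ⟨a, ha⟩ else 0 with hGdef
  have hDnn : ∀ a b, 0 ≤ D a b := by
    intro a b
    rw [hDdef]
    dsimp only
    split_ifs with h1 h2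
    · positivity
    · exact le_refl 0
    · exact le_refl 0
  have hDrow : ∀ a, a < min m n → ∑ b ∈ Finset.range (min m n), D a b ≤ 1 := by
    intro a ha
    have he : ∑ b ∈ Finset.range (min m n), D a b
        = ∑ l : Fin (min m n), ((P ⟨a, ha⟩ l)^2 + (Q ⟨a, ha⟩ l)^2)/2 := by
      rw [← Fin.sum_univ_eq_sum_range (fun b => D a b) (min m n)]
      refine Finset.sum_congr rfl fun l _ => ?_
      rw [hDdef]
      dsimp only
      rw [dif_pos ha, dif_pos l.2]
    rw [he]
    have hsplit : ∑ l : Fin (min m n), ((P ⟨a, ha⟩ l)^2 + (Q ⟨a, ha⟩ l)^2)/2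
        = (∑ l : Fin (min m n), (P ⟨a, ha⟩ l)^2 + ∑ l : Fin (min m n), (Q ⟨a, ha⟩ l)^2)/2 := by
      rw [← Finset.sum_div, Finset.sum_add_distrib]
    rw [hsplit]
    linarith [hProw ⟨a, ha⟩, hQrow ⟨a, ha⟩]
  have hDcol : ∀ b, b < min m n → ∑ a ∈ Finset.range (min m n), D a b ≤ 1 := by
    intro b hb
    have he : ∑ a ∈ Finset.range (min m n), D a b
        = ∑ k : Fin (min m n), ((P k ⟨b, hb⟩)^2 + (Q k ⟨b, hb⟩)^2)/2 := by
      rw [← Fin.sum_univ_eq_sum_range (fun a => D a b) (min m n)]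
      refine Finset.sum_congr rfl fun k _ => ?_
      rw [hDdef]
      dsimp only
      rw [dif_pos k.2, dif_pos hb]
    rw [he]
    have hsplit : ∑ k : Fin (min m n), ((P k ⟨b, hb⟩)^2 + (Q k ⟨b, hb⟩)^2)/2
        = (∑ k : Fin (min m n), (P k ⟨b, hb⟩)^2 + ∑ k : Fin (min m n), (Q k ⟨b, hb⟩)^2)/2 := by
      rw [← Finset.sum_div, Finset.sum_add_distrib]
    rw [hsplit]
    linarith [hPcol ⟨b, hb⟩, hQcol ⟨b, hb⟩]
  have hFanti : Antitone F := by
    intro a b hab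
    rw [hFdef]
    dsimp only
    by_cases hb : b < min m n
    · rw [dif_pos hb, dif_pos (lt_of_le_of_lt hab hb)]
      exact hσAanti (show (⟨a, lt_of_le_of_lt hab hb⟩ : Fin (min m n)) ≤ ⟨b, hb⟩ from hab)
    · rw [dif_neg hb]
      by_cases ha : a < min m n
      · rw [dif_pos ha]; exact hσApos _
      · rw [dif_neg ha]
  have hGanti : Antitone G := by
    intro a b hab
    rw [hGdef]
    dsimp only
    by_cases hb : b < min m n
    · rw [dif_pos hb, dif_pos (lt_of_le_of_lt hab hb)]
      exact hσBanti (show (⟨a, lt_of_le_of_lt hab hb⟩ : Fin (min m n)) ≤ ⟨b, hb⟩ from hab)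
    · rw [dif_neg hb]
      by_cases ha : a < min m n
      · rw [dif_pos ha]; exact hσBpos _
      · rw [dif_neg ha]
  have hF0 : F (min m n) = 0 := by rw [hFdef]; exact dif_neg (lt_irrefl _)
  have hG0 : G (min m n) = 0 := by rw [hGdef]; exact dif_neg (lt_irrefl _)
  -- the final chain
  rw [htr]
  calc ∑ k : Fin (min m n), ∑ l : Fin (min m n), σA k * σB l * (P k l * Q k l)
      ≤ ∑ k : Fin (min m n), ∑ l : Fin (min m n), D k.1 l.1 * (F k.1 * G l.1) := by
        refine Finset.sum_le_sum fun k _ => Finset.sum_le_sum fun l _ => ?_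
        rw [hDdef, hFdef, hGdef]
        dsimp only
        rw [dif_pos k.2, dif_pos l.2, dif_pos k.2, dif_pos l.2]
        have h1 : P k l * Q k l ≤ ((P k l)^2 + (Q k l)^2)/2 := by
          nlinarith [sq_nonneg (P k l - Q k l)]
        have h2 : 0 ≤ σA k * σB l := mul_nonneg (hσApos k) (hσBpos l)
        calc σA k * σB l * (P k l * Q k l)
            ≤ σA k * σB l * (((P k l)^2 + (Q k l)^2)/2) := mul_le_mul_of_nonneg_left h1 h2
          _ = ((P k l)^2 + (Q k l)^2)/2 * (σA k * σB l) := by ring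
    _ = ∑ a ∈ Finset.range (min m n), ∑ b ∈ Finset.range (min m n), D a b * (F a * G b) := by
        rw [← Fin.sum_univ_eq_sum_range
          (fun a => ∑ b ∈ Finset.range (min m n), D a b * (F a * G b)) (min m n)]
        refine Finset.sum_congr rfl fun k _ => ?_
        rw [← Fin.sum_univ_eq_sum_range (fun b => D k.1 b * (F k.1 * G b)) (min m n)]
    _ ≤ ∑ a ∈ Finset.range (min m n), F a * G a :=
        vn_rearr (min m n) D F G hDnn hDrow hDcol hFanti hGanti hF0 hG0
    _ = ∑ i : Fin (min m n), σA i * σB i := by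
        rw [← Fin.sum_univ_eq_sum_range (fun a => F a * G a) (min m n)]
        refine Finset.sum_congr rfl fun k _ => ?_
        rw [hFdef, hGdef]
        dsimp only
        rw [dif_pos k.2, dif_pos k.2]
end

section
/- Let Σ = diag(σ₁, …, σ_r) with σ₁ ≥ … ≥ σ_r ≥ 0 (padded with zeros to an m×n matrix) and let Q ∈ ℝ^{m×n} satisfy rank(Q) ≤ k and ‖Q‖₂ ≤ τ. Then tr(ΣᵀQ) ≤ τ·Σ_{i=1}^{min(k,r)} σᵢ, with equality when Q = τ·diag(1,…,1,0,…,0) with min(k,r) ones. -/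
open Matrix BigOperators

open Finset

/-!
The trace equals `∑ i, σ i * Q i i`. Summation by parts (with `σ r = 0`) rewrites it as the
nonnegative combination `∑ l, (σ l - σ (l+1)) * D (l+1)` of the partial diagonal sums
`D l = ∑ i < l, Q i i`; the weights `τ * [i < k]` have partial sums `τ * min l k`, so it suffices
that `D l ≤ τ * min l k`. Termwise, `D l ≤ l * ‖Q‖`. For the rank bound write
`D l = ∑ i < l, ⟪eᵢ, Q eᵢ⟫`, expand `Q eᵢ` in an orthonormal basis `(w a)` of the range of `Q`,
and bound each `∑ i, ⟪eᵢ, w a⟫ * ⟪Qᵀ w a, eᵢ⟫` by `‖Qᵀ w a‖ ≤ ‖Q‖` (Cauchy–Schwarz and Bessel).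
-/

section InnerProductSpace

variable {ι E F : Type*} [NormedAddCommGroup E] [InnerProductSpace ℝ E]
  [NormedAddCommGroup F] [InnerProductSpace ℝ F]

theorem Orthonormal.sum_inner_mul_inner_le {u : ι → F} {v : ι → E}
    (hu : Orthonormal ℝ u) (hv : Orthonormal ℝ v) (s : Finset ι) (x : E) (y : F) :
    ∑ i ∈ s, inner ℝ (v i) x * inner ℝ (u i) y ≤ ‖x‖ * ‖y‖ := by
  have hx := hv.sum_inner_products_le x (s := s)
  have hy := hu.sum_inner_products_le y (s := s)
  simp only [Real.norm_eq_abs, sq_abs] at hx hy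
  calc ∑ i ∈ s, inner ℝ (v i) x * inner ℝ (u i) y
      ≤ √(∑ i ∈ s, inner ℝ (v i) x ^ 2) * √(∑ i ∈ s, inner ℝ (u i) y ^ 2) :=
        Real.sum_mul_le_sqrt_mul_sqrt _ _ _
    _ ≤ √(‖x‖ ^ 2) * √(‖y‖ ^ 2) := by gcongr
    _ = ‖x‖ * ‖y‖ := by rw [Real.sqrt_sq (norm_nonneg _), Real.sqrt_sq (norm_nonneg _)]

theorem ContinuousLinearMap.sum_inner_le_card_mul_opNorm (T : E →L[ℝ] F) {u : ι → F} {v : ι → E}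
    (hu : ∀ i, ‖u i‖ ≤ 1) (hv : ∀ i, ‖v i‖ ≤ 1) (s : Finset ι) :
    ∑ i ∈ s, inner ℝ (u i) (T (v i)) ≤ s.card * ‖T‖ := by
  rw [← nsmul_eq_mul]
  refine sum_le_card_nsmul _ _ _ fun i _ => ?_
  calc inner ℝ (u i) (T (v i)) ≤ ‖u i‖ * (‖T‖ * ‖v i‖) :=
        (real_inner_le_norm _ _).trans (by gcongr; exact T.le_opNorm _)
    _ ≤ 1 * (‖T‖ * 1) := by gcongr <;> simp [hu, hv]
    _ = ‖T‖ := by ring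

theorem ContinuousLinearMap.sum_inner_le_finrank_range_mul_opNorm [CompleteSpace E]
    [FiniteDimensional ℝ F] (T : E →L[ℝ] F) {u : ι → F} {v : ι → E}
    (hu : Orthonormal ℝ u) (hv : Orthonormal ℝ v) (s : Finset ι) :
    ∑ i ∈ s, inner ℝ (u i) (T (v i)) ≤
      Module.finrank ℝ (LinearMap.range (T : E →ₗ[ℝ] F)) * ‖T‖ := by
  set b := stdOrthonormalBasis ℝ (LinearMap.range (T : E →ₗ[ℝ] F))
  have expand : ∀ i, inner ℝ (u i) (T (v i)) =
      ∑ a, inner ℝ (v i) (adjoint T (b a)) * inner ℝ (u i) (b a : F) := by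
    intro i
    set z : LinearMap.range (T : E →ₗ[ℝ] F) := ⟨T (v i), LinearMap.mem_range_self _ (v i)⟩
    have h : T (v i) = ((∑ a, inner ℝ (b a) z • b a : LinearMap.range (T : E →ₗ[ℝ] F)) : F) := by
      rw [b.sum_repr']
    rw [h]
    simp [inner_sum, inner_smul_right, adjoint_inner_right, mul_comm, real_inner_comm, z]
  calc ∑ i ∈ s, inner ℝ (u i) (T (v i))
      = ∑ a, ∑ i ∈ s, inner ℝ (v i) (adjoint T (b a)) * inner ℝ (u i) (b a : F) := by
        rw [sum_comm]; exact sum_congr rfl fun i _ => expand i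
    _ ≤ ∑ _a : Fin (Module.finrank ℝ (LinearMap.range (T : E →ₗ[ℝ] F))), ‖T‖ := by
        gcongr with a
        have hba : ‖(b a : F)‖ = 1 := b.orthonormal.1 a
        calc _ ≤ ‖adjoint T (b a)‖ * ‖(b a : F)‖ := hu.sum_inner_mul_inner_le hv s _ _
          _ ≤ ‖adjoint T‖ * ‖(b a : F)‖ * ‖(b a : F)‖ := by gcongr; exact le_opNorm _ _
          _ = ‖T‖ := by simp [hba]
    _ = _ := by simp

end InnerProductSpace

theorem Matrix.rank_eq_finrank_range_toEuclideanLin {𝕜 m n : Type*} [RCLike 𝕜] [Fintype m]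
    [Fintype n] [DecidableEq n] (A : Matrix m n 𝕜) :
    A.rank = Module.finrank 𝕜 (LinearMap.range (toEuclideanLin A)) := by
  rw [toEuclideanLin_eq_toLin_orthonormal]
  exact A.rank_eq_finrank_range_toLin _ _

theorem sum_leading_diag_le_min_rank_mul_specNorm {m n L : ℕ} (hm : L ≤ m) (hn : L ≤ n)
    (Q : Matrix (Fin m) (Fin n) ℝ) :
    ∑ i : Fin L, Q (Fin.castLE hm i) (Fin.castLE hn i) ≤ min L Q.rank * specNorm Q := by
  set T := LinearMap.toContinuousLinearMap (toEuclideanLin Q)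
  set u := fun i : Fin L => EuclideanSpace.single (Fin.castLE hm i) (1 : ℝ)
  set v := fun i : Fin L => EuclideanSpace.single (Fin.castLE hn i) (1 : ℝ)
  have hu : Orthonormal ℝ u := EuclideanSpace.orthonormal_single.comp _ (Fin.castLE_injective hm)
  have hv : Orthonormal ℝ v := EuclideanSpace.orthonormal_single.comp _ (Fin.castLE_injective hn)
  have entry : ∀ i, Q (Fin.castLE hm i) (Fin.castLE hn i) = inner ℝ (u i) (T (v i)) := by
    intro i
    simp [u, v, T, EuclideanSpace.inner_single_left]
  simp only [entry]
  change _ ≤ _ * ‖T‖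
  rcases min_cases L Q.rank with ⟨h, -⟩ | ⟨h, -⟩ <;> rw [h]
  · simpa using T.sum_inner_le_card_mul_opNorm (fun i => (hu.1 i).le) (fun i => (hv.1 i).le) univ
  · rw [rank_eq_finrank_range_toEuclideanLin]
    exact T.sum_inner_le_finrank_range_mul_opNorm hu hv univ

theorem Finset.sum_range_mul_le_of_partial_sums_le {a d c : ℕ → ℝ} {N : ℕ} (ha : Antitone a)
    (ha₀ : ∀ i, 0 ≤ a i) (hdc : ∀ l ≤ N, ∑ i ∈ range l, d i ≤ ∑ i ∈ range l, c i) :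
    ∑ i ∈ range N, a i * d i ≤ ∑ i ∈ range N, a i * c i := by
  have by_parts := fun g : ℕ → ℝ => sum_range_by_parts a g N
  simp only [smul_eq_mul] at by_parts
  rw [by_parts, by_parts]
  refine sub_le_sub (mul_le_mul_of_nonneg_left (hdc N le_rfl) (ha₀ _))
    (sum_le_sum fun i hi => mul_le_mul_of_nonpos_left ?_ (sub_nonpos.mpr (ha (Nat.le_succ i))))
  exact hdc (i + 1) (by rw [mem_range] at hi; omega)

theorem Antitone.sum_mul_le_of_partial_sums_le {r : ℕ} {a d c : Fin r → ℝ} (ha : Antitone a)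
    (ha₀ : ∀ i, 0 ≤ a i)
    (hdc : ∀ l (hl : l ≤ r),
      ∑ i : Fin l, d (Fin.castLE hl i) ≤ ∑ i : Fin l, c (Fin.castLE hl i)) :
    ∑ i, a i * d i ≤ ∑ i, a i * c i := by
  let pad : (Fin r → ℝ) → ℕ → ℝ := fun f j => if h : j < r then f ⟨j, h⟩ else 0
  have sum_castLE : ∀ f : Fin r → ℝ, ∀ l (hl : l ≤ r),
      ∑ i : Fin l, f (Fin.castLE hl i) = ∑ j ∈ range l, pad f j := by
    intro f l hl
    rw [sum_fin_eq_sum_range]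
    refine sum_congr rfl fun j hj => ?_
    have : j < l := by simpa using hj
    simp [pad, this, this.trans_le hl]
  have sum_mul : ∀ f : Fin r → ℝ,
      ∑ i, a i * f i = ∑ j ∈ range r, pad a j * pad f j := by
    intro f
    rw [sum_fin_eq_sum_range]
    refine sum_congr rfl fun j hj => ?_
    have : j < r := by simpa using hj
    simp [pad, this]
  rw [sum_mul, sum_mul]
  refine sum_range_mul_le_of_partial_sums_le ?_ ?_ fun l hl => ?_
  · intro i j hij
    simp only [pad]
    split_ifs with hj hi hi
    · exact ha (Fin.mk_le_mk.mpr hij)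
    · exact absurd (hij.trans_lt hj) hi
    · exact ha₀ _
    · exact le_rfl
  · intro j
    simp only [pad]
    split_ifs
    exacts [ha₀ _, le_rfl]
  · rw [← sum_castLE, ← sum_castLE]
    exact hdc l hl

theorem trace_transpose_padDiag_mul {m n r : ℕ} (hm : r ≤ m) (hn : r ≤ n) (σ : Fin r → ℝ)
    (Q : Matrix (Fin m) (Fin n) ℝ) :
    ((padDiag m n σ)ᵀ * Q).trace = ∑ i, σ i * Q (Fin.castLE hm i) (Fin.castLE hn i) := by
  have trace_eq : ((padDiag m n σ)ᵀ * Q).trace =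
      ∑ p : Fin m × Fin n, padDiag m n σ p.1 p.2 * Q p.1 p.2 := by
    simp [trace, mul_apply, Fintype.sum_prod_type, sum_comm (γ := Fin m)]
  rw [trace_eq, eq_comm]
  refine sum_of_injOn (fun i => (Fin.castLE hm i, Fin.castLE hn i)) ?_ (by simp) ?_ ?_
  · intro i _ j _ hij
    exact Fin.castLE_injective hm (congrArg Prod.fst hij)
  · rintro ⟨i, j⟩ - hij
    simp only [padDiag, of_apply]
    rw [dif_neg, zero_mul]
    rintro ⟨hij', hir⟩
    exact hij ⟨⟨i, hir⟩, by simp, by ext <;> simp [hij']⟩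
  · intro i _
    simp [padDiag]

theorem stmt7_general {m n r k : ℕ} (hr : r ≤ min m n) (τ : ℝ)
    (σ : Fin r → ℝ) (hσanti : Antitone σ) (hσpos : ∀ i, 0 ≤ σ i)
    (Q : Matrix (Fin m) (Fin n) ℝ)
    (hrank : Q.rank ≤ k) (hspec : specNorm Q ≤ τ) :
    Matrix.trace ((padDiag m n σ)ᵀ * Q) ≤
      τ * ∑ i : Fin r, (if (i : ℕ) < k then σ i else 0) ∧
    Matrix.trace ((padDiag m n σ)ᵀ *
        (τ • padDiag m n (fun i : Fin r => if (i : ℕ) < k then (1 : ℝ) else 0))) =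
      τ * ∑ i : Fin r, (if (i : ℕ) < k then σ i else 0) := by
  have hm : r ≤ m := hr.trans (min_le_left _ _)
  have hn : r ≤ n := hr.trans (min_le_right _ _)
  have rhs : τ * ∑ i : Fin r, (if (i : ℕ) < k then σ i else 0) =
      ∑ i, σ i * (if (i : ℕ) < k then τ else 0) := by
    rw [mul_sum]
    exact sum_congr rfl fun i _ => by split_ifs <;> ring
  rw [trace_transpose_padDiag_mul hm hn, trace_transpose_padDiag_mul hm hn, rhs]
  refine ⟨hσanti.sum_mul_le_of_partial_sums_le hσpos fun l hl => ?_, ?_⟩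
  · calc ∑ i : Fin l, Q (Fin.castLE hm (Fin.castLE hl i)) (Fin.castLE hn (Fin.castLE hl i))
        = ∑ i : Fin l, Q (Fin.castLE (hl.trans hm) i) (Fin.castLE (hl.trans hn) i) := by simp
      _ ≤ (min l Q.rank : ℕ) * specNorm Q := sum_leading_diag_le_min_rank_mul_specNorm _ _ Q
      _ ≤ (min l k : ℕ) * τ := mul_le_mul (by gcongr) hspec (norm_nonneg _) (by positivity)
      _ = ∑ i : Fin l, (if (Fin.castLE hl i : ℕ) < k then τ else 0) := by
        simp [sum_ite, Fin.card_filter_val_lt]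
  · exact sum_congr rfl fun i _ => by simp [padDiag]

theorem stmt7 {m n r k : ℕ} (hr : r ≤ min m n) (τ : ℝ) (hτ : 0 ≤ τ)
    (σ : Fin r → ℝ) (hσanti : Antitone σ) (hσpos : ∀ i, 0 ≤ σ i)
    (Q : Matrix (Fin m) (Fin n) ℝ)
    (hrank : Q.rank ≤ k) (hspec : specNorm Q ≤ τ) :
    Matrix.trace ((padDiag m n σ)ᵀ * Q) ≤
      τ * ∑ i : Fin r, (if (i : ℕ) < k then σ i else 0) ∧
    Matrix.trace ((padDiag m n σ)ᵀ *
        (τ • padDiag m n (fun i : Fin r => if (i : ℕ) < k then (1 : ℝ) else 0))) =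
      τ * ∑ i : Fin r, (if (i : ℕ) < k then σ i else 0) :=
  stmt7_general hr τ σ hσanti hσpos Q hrank hspec
end
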